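/- The Kleisli resolution is initial: let T be a relative monad on J : A ⥤ E and let L ⊣_J R (L : A ⥤ C, R : C ⥤ E) be any resolution of T (i.e. a relative adjunction inducing T). Then there exists a unique functor F : Kl(T) ⥤ C such that k_T ⋙ F = L and F ⋙ R = v_T. -/

import Mathlib

open CategoryTheory CategoryTheory.Limits

universe v₁ v₂ v₃ v₄ v₅ u₁ u₂ u₃ u₄ u₅

/-- A relative monad on `J : A ⥤ E` in Kleisli-triple form. -/
structure RelMonad {A : Type u₁} {E : Type u₂} [Category.{v₁} A] [Category.{v₂} E]
    (J : A ⥤ E) where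
  obj : A → E
  unit : ∀ x : A, J.obj x ⟶ obj x
  ext : ∀ {x y : A}, (J.obj x ⟶ obj y) → (obj x ⟶ obj y)
  ext_unit : ∀ x : A, ext (unit x) = 𝟙 (obj x)
  unit_ext : ∀ {x y : A} (f : J.obj x ⟶ obj y), unit x ≫ ext f = f
  ext_ext : ∀ {x y z : A} (f : J.obj x ⟶ obj y) (g : J.obj y ⟶ obj z),
    ext (f ≫ ext g) = ext f ≫ ext g

/-- A relative adjunction `L ⊣_J R`: bijections `(L.obj x ⟶ c) ≃ (J.obj x ⟶ R.obj c)`,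
natural in `x` and `c`. -/
structure RelAdjCore {A : Type u₁} {E : Type u₂} {C : Type u₃}
    [Category.{v₁} A] [Category.{v₂} E] [Category.{v₃} C]
    (J : A ⥤ E) (L : A ⥤ C) (R : C ⥤ E) where
  equiv : ∀ (x : A) (c : C), (L.obj x ⟶ c) ≃ (J.obj x ⟶ R.obj c)
  nat_left : ∀ {x' x : A} (a : x' ⟶ x) {c : C} (g : L.obj x ⟶ c),
    equiv x' c (L.map a ≫ g) = J.map a ≫ equiv x c g
  nat_right : ∀ {x : A} {c c' : C} (g : L.obj x ⟶ c) (h : c ⟶ c'),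
    equiv x c' (g ≫ h) = equiv x c g ≫ R.map h

/-- The relative monad on `J` induced by a relative adjunction `L ⊣_J R`. -/
def RelAdjCore.induced {A : Type u₁} {E : Type u₂} {C : Type u₃}
    [Category.{v₁} A] [Category.{v₂} E] [Category.{v₃} C]
    {J : A ⥤ E} {L : A ⥤ C} {R : C ⥤ E} (adj : RelAdjCore J L R) : RelMonad J where
  obj x := R.obj (L.obj x)
  unit x := adj.equiv x (L.obj x) (𝟙 (L.obj x))
  ext {x y} f := R.map ((adj.equiv x (L.obj y)).symm f)
  ext_unit x := by simp
  unit_ext {x y} f := by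
    rw [← adj.nat_right, Category.id_comp, Equiv.apply_symm_apply]
  ext_ext {x y z} f g := by
    show R.map ((adj.equiv x (L.obj z)).symm
        (f ≫ R.map ((adj.equiv y (L.obj z)).symm g))) =
      R.map ((adj.equiv x (L.obj y)).symm f) ≫ R.map ((adj.equiv y (L.obj z)).symm g)
    rw [← R.map_comp]
    congr 1
    apply (adj.equiv x (L.obj z)).injective
    rw [Equiv.apply_symm_apply, adj.nat_right, Equiv.apply_symm_apply]

/-- The Kleisli category of a relative monad: objects those of `A`,
hom-sets `Hom(x, y) := (J.obj x ⟶ T.obj y)`. -/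
def RelKleisli {A : Type u₁} {E : Type u₂} [Category.{v₁} A] [Category.{v₂} E]
    {J : A ⥤ E} (_T : RelMonad J) : Type u₁ := A

instance RelKleisli.category {A : Type u₁} {E : Type u₂} [Category.{v₁} A]
    [Category.{v₂} E] {J : A ⥤ E} (T : RelMonad J) : Category.{v₂} (RelKleisli T) where
  Hom x y := J.obj x ⟶ T.obj y
  id x := T.unit x
  comp {x y z} f g := (f : J.obj x ⟶ T.obj y) ≫ T.ext g
  id_comp {x y} f := T.unit_ext f
  comp_id {x y} f := by
    have e : ∀ f' : J.obj x ⟶ T.obj y, f' ≫ T.ext (T.unit y) = f' := by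
      intro f'; exact (congrArg (f' ≫ ·) (T.ext_unit y)).trans (Category.comp_id f')
    exact e f
  assoc {w x y z} f g h := by
    have e : ∀ (f' : J.obj w ⟶ T.obj x) (g' : J.obj x ⟶ T.obj y)
        (h' : J.obj y ⟶ T.obj z),
        (f' ≫ T.ext g') ≫ T.ext h' = f' ≫ T.ext (g' ≫ T.ext h') := by
      intro f' g' h'; exact (Category.assoc _ _ _).trans (congrArg (f' ≫ ·) (T.ext_ext g' h').symm)
    exact e f g h

/-- The identity-on-objects Kleisli inclusion. -/
def kT {A : Type u₁} {E : Type u₂} [Category.{v₁} A] [Category.{v₂} E]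
    {J : A ⥤ E} (T : RelMonad J) : A ⥤ RelKleisli T where
  obj x := x
  map {x y} a := (J.map a ≫ T.unit y : J.obj x ⟶ T.obj y)
  map_id x := by
    have e : J.map (𝟙 x) ≫ T.unit x = T.unit x := by simp
    exact e
  map_comp {x y z} a b := by
    have e : J.map (a ≫ b) ≫ T.unit z =
        (J.map a ≫ T.unit y) ≫ T.ext (J.map b ≫ T.unit z) := by
      rw [Category.assoc, T.unit_ext, J.map_comp, Category.assoc]
    exact e

/-- The comparison functor `Kl(T) ⥤ E`, sending `x` to `T₀ x` and `f` to `f†`. -/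
def vT {A : Type u₁} {E : Type u₂} [Category.{v₁} A] [Category.{v₂} E]
    {J : A ⥤ E} (T : RelMonad J) : RelKleisli T ⥤ E where
  obj x := T.obj x
  map {x y} f := T.ext f
  map_id x := T.ext_unit x
  map_comp {x y z} f g := by
    have e : T.ext ((f : J.obj x ⟶ T.obj y) ≫ T.ext g) = T.ext f ≫ T.ext g :=
      T.ext_ext f g
    exact e

/-- The Kleisli resolution is initial among resolutions: for any relative adjunction
`L ⊣_J R` inducing `T`, there is a unique functor `F : Kl(T) ⥤ C` with
`k_T ⋙ F = L` and `F ⋙ R = v_T`. -/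
theorem stmt15 {A : Type u₁} {E : Type u₂} {C : Type u₃}
    [Category.{v₁} A] [Category.{v₂} E] [Category.{v₃} C]
    (J : A ⥤ E) (T : RelMonad J) (L : A ⥤ C) (R : C ⥤ E)
    (adj : RelAdjCore J L R) (hres : adj.induced = T) :
    ∃! F : RelKleisli T ⥤ C, kT T ⋙ F = L ∧ F ⋙ R = vT T := by
  subst hres
  set T := adj.induced with hT
  refine ⟨{ obj := fun x => L.obj x
            map := fun {x y} f => (adj.equiv x (L.obj y)).symm f
            map_id := fun x => by
              show (adj.equiv x (L.obj x)).symm (adj.equiv x (L.obj x) (𝟙 _)) = 𝟙 _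
              simp
            map_comp := fun {x y z} f g => by
              apply (adj.equiv x (L.obj z)).injective
              show adj.equiv x (L.obj z) ((adj.equiv x (L.obj z)).symm
                  ((f : J.obj x ⟶ T.obj y) ≫ R.map ((adj.equiv y (L.obj z)).symm g))) = _
              erw [Equiv.apply_symm_apply, adj.nat_right, Equiv.apply_symm_apply]; rfl },
        ⟨?_, ?_⟩, ?_⟩
  · refine CategoryTheory.Functor.ext (fun x => rfl) ?_
    intro x y a
    show (adj.equiv x (L.obj y)).symm (J.map a ≫ adj.equiv y (L.obj y) (𝟙 _)) = _
    apply (adj.equiv x (L.obj y)).injective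
    rw [Equiv.apply_symm_apply, ← adj.nat_left]
    simp
    congr 1
    erw [eqToHom_refl, eqToHom_refl, Category.id_comp, Category.comp_id]
  · refine CategoryTheory.Functor.ext (fun x => rfl) ?_
    intro x y f
    show R.map ((adj.equiv x (L.obj y)).symm f) = _ ≫ T.ext f ≫ _
    have h : R.map ((adj.equiv x (L.obj y)).symm f) = T.ext f := rfl
    erw [h, eqToHom_refl, eqToHom_refl]
    exact ((Category.id_comp _).trans (Category.comp_id _)).symm
  · rintro F' ⟨h1, h2⟩
    have hobj : ∀ x : RelKleisli T, F'.obj x = L.obj x := fun x =>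
      Functor.congr_obj h1 x
    refine CategoryTheory.Functor.ext hobj ?_
    intro x y f
    have key : (adj.equiv x (L.obj y)).symm f =
        eqToHom (hobj x).symm ≫ F'.map f ≫ eqToHom (hobj y) := by
      apply (adj.equiv x (L.obj y)).injective
      erw [Equiv.apply_symm_apply]
      have hR : R.map (F'.map f) =
          eqToHom (by rw [hobj]; rfl) ≫ T.ext f ≫ eqToHom (by rw [hobj]; rfl) := by
        have := Functor.congr_hom h2 f
        simpa [vT] using this
      have hnat : adj.equiv x (L.obj y)
            (eqToHom (hobj x).symm ≫ F'.map f ≫ eqToHom (hobj y)) =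
          adj.equiv x (L.obj x) (𝟙 _) ≫
            R.map (eqToHom (hobj x).symm ≫ F'.map f ≫ eqToHom (hobj y)) := by
        erw [← adj.nat_right, Category.id_comp]
      rw [hnat]
      show (f : J.obj x ⟶ T.obj y) = _
      simp only [Functor.map_comp, eqToHom_map, hR, Category.assoc, eqToHom_trans,
        eqToHom_trans_assoc, eqToHom_refl, Category.id_comp, Category.comp_id]
      erw [eqToHom_refl, eqToHom_refl, Category.id_comp, Category.comp_id]
      exact (T.unit_ext f).symm
    show F'.map f = eqToHom (hobj x) ≫ (adj.equiv x (L.obj y)).symm f ≫ eqToHom (hobj y).symm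
    rw [key]
    simp
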